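/- arXiv:2508.13540 — 3 statements merged into one kernel-verified Lean document; each statement's English description precedes it below -/
import Mathlib

section
/- Let D ≥ 2, let n = 2D or n = 2D+1, and let Γ be the cycle graph on ZMod n with graph distance ∂ and automorphism group Aut(Γ) acting diagonally on triples. Then two triples (x,y,z), (x',y',z') ∈ (ZMod n)³ lie in the same Aut(Γ)-orbit if and only if they have the same distance profile, i.e. ∂(y,z) = ∂(y',z'), ∂(x,z) = ∂(x',z'), and ∂(x,y) = ∂(x',y'). In particular, no two distinct orbits have the same distance profile. -/
/-!
An automorphism `g` of the cycle moves along each edge by `±1`, and by injectivity two consecutive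
steps cannot cancel, so the step is constant and `g` is `x ↦ c + x` or `x ↦ c - x`. The distance is `|valMinAbs (x - y)|`, so these maps preserve it, and
equal distances mean equal differences up to sign. For triples the three signs are forced to agree,
and a translation or a reflection then carries one triple to the other.
-/

/-- Adjacency in the cycle graph on `ZMod n`. -/
def cycAdj (n : ℕ) (x y : ZMod n) : Prop := x - y = 1 ∨ y - x = 1

/-- Graph distance in the cycle graph on `ZMod n`. -/
def cycDist (n : ℕ) (x y : ZMod n) : ℕ := min (x - y).val (n - (x - y).val)

/-- The automorphism group of the cycle graph on `ZMod n`. -/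
def cycAut (n : ℕ) : Subgroup (Equiv.Perm (ZMod n)) where
  carrier := {g | ∀ x y, cycAdj n (g x) (g y) ↔ cycAdj n x y}
  one_mem' := by intro x y; simp
  mul_mem' := by
    intro a b ha hb x y
    simp only [Equiv.Perm.mul_apply]
    exact (ha (b x) (b y)).trans (hb x y)
  inv_mem' := by
    intro a ha x y
    have h := ha (a⁻¹ x) (a⁻¹ y)
    simpa using h.symm

section CycleDistance

variable {n : ℕ} [NeZero n]

lemma cycDist_eq_natAbs_valMinAbs (x y : ZMod n) :
    cycDist n x y = (x - y).valMinAbs.natAbs :=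
  (ZMod.valMinAbs_natAbs_eq_min _).symm

lemma cycDist_eq_cycDist_iff {x y x' y' : ZMod n} :
    cycDist n x y = cycDist n x' y' ↔ x - y = x' - y' ∨ x - y = -(x' - y') := by
  simp only [cycDist_eq_natAbs_valMinAbs, ZMod.natAbs_valMinAbs_eq_natAbs_valMinAbs]

lemma cycDist_add_left (c x y : ZMod n) : cycDist n (c + x) (c + y) = cycDist n x y := by
  rw [cycDist_eq_cycDist_iff, add_sub_add_left_eq_sub]
  exact Or.inl rfl

lemma cycDist_sub_left (c x y : ZMod n) : cycDist n (c - x) (c - y) = cycDist n x y := by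
  rw [cycDist_eq_cycDist_iff, sub_sub_sub_cancel_left, neg_sub]
  exact Or.inr rfl

end CycleDistance

section CycleAutomorphisms

variable {n : ℕ} {g : Equiv.Perm (ZMod n)}

lemma addLeft_mem_cycAut (c : ZMod n) : Equiv.addLeft c ∈ cycAut n := by
  intro x y
  simp only [cycAdj, Equiv.coe_addLeft, add_sub_add_left_eq_sub]

lemma subLeft_mem_cycAut (c : ZMod n) : Equiv.subLeft c ∈ cycAut n := by
  intro x y
  simp only [cycAdj, Equiv.subLeft_apply, sub_sub_sub_cancel_left]
  exact or_comm

lemma apply_add_one_sub_apply_of_mem_cycAut (hg : g ∈ cycAut n) (x : ZMod n) :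
    g (x + 1) - g x = 1 ∨ g (x + 1) - g x = -1 := by
  have hadj : cycAdj n (g (x + 1)) (g x) := (hg (x + 1) x).2 (Or.inl (add_sub_cancel_left x 1))
  rcases hadj with h | h
  · exact Or.inl h
  · exact Or.inr (by linear_combination -h)

lemma apply_add_two_sub_apply_of_mem_cycAut (hg : g ∈ cycAut n) (x : ZMod n) :
    g (x + 1 + 1) - g (x + 1) = g (x + 1) - g x := by
  -- Opposite steps would give `g (x + 2) = g x`, hence `2 = 0`, and then they agree anyway.
  have of_add_eq_zero :
      g (x + 1 + 1) - g (x + 1) + (g (x + 1) - g x) = 0 →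
        g (x + 1 + 1) - g (x + 1) = g (x + 1) - g x := by
    intro hsum
    have hg2 : g (x + 1 + 1) = g x := by linear_combination hsum
    have two_eq_zero : (2 : ZMod n) = 0 := by linear_combination g.injective hg2
    linear_combination hsum - (g (x + 1) - g x) * two_eq_zero
  rcases apply_add_one_sub_apply_of_mem_cycAut hg (x + 1) with h' | h' <;>
    rcases apply_add_one_sub_apply_of_mem_cycAut hg x with h | h
  all_goals first
    | exact h'.trans h.symm
    | exact of_add_eq_zero (by linear_combination h' + h)

lemma apply_natCast_of_mem_cycAut (hg : g ∈ cycAut n) (k : ℕ) :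
    g k = g 0 + k * (g 1 - g 0) := by
  have hstep : ∀ m : ℕ, g (m + 1) - g m = g 1 - g 0 := by
    intro m
    induction m with
    | zero => simp
    | succ m ih =>
      push_cast
      rw [apply_add_two_sub_apply_of_mem_cycAut hg, ih]
  induction k with
  | zero => simp
  | succ k ih =>
    push_cast
    linear_combination hstep k + ih

theorem eq_addLeft_or_eq_subLeft_of_mem_cycAut [NeZero n] (hg : g ∈ cycAut n) :
    g = Equiv.addLeft (g 0) ∨ g = Equiv.subLeft (g 0) := by
  have hform (x : ZMod n) : g x = g 0 + x * (g 1 - g 0) := by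
    simpa only [ZMod.natCast_zmod_val] using apply_natCast_of_mem_cycAut hg x.val
  rcases apply_add_one_sub_apply_of_mem_cycAut hg 0 with h | h <;> rw [zero_add] at h
  · left
    ext x
    rw [hform, h, Equiv.coe_addLeft, mul_one]
  · right
    ext x
    rw [hform, h, Equiv.subLeft_apply, mul_neg_one, ← sub_eq_add_neg]

lemma cycDist_apply_of_mem_cycAut [NeZero n] (hg : g ∈ cycAut n) (x y : ZMod n) :
    cycDist n (g x) (g y) = cycDist n x y := by
  rcases eq_addLeft_or_eq_subLeft_of_mem_cycAut hg with h | h <;> rw [h]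
  · exact cycDist_add_left _ x y
  · exact cycDist_sub_left _ x y

end CycleAutomorphisms

-- In a mixed case, say `a = a'` and `b = -b'`, the third relation forces `a' = -a'` or `b' = -b'`,
-- so that case coincides with one of the two pure ones.
lemma eq_and_eq_or_eq_neg_and_eq_neg {G : Type*} [AddCommGroup G] {a b a' b' : G}
    (ha : a = a' ∨ a = -a') (hb : b = b' ∨ b = -b')
    (hab : b - a = b' - a' ∨ b - a = -(b' - a')) :
    (a = a' ∧ b = b') ∨ (a = -a' ∧ b = -b') := by
  grind

/-- two triples of vertices of the cycle lie in the same `Aut(Γ)`-orbit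
(under the diagonal action) if and only if they have the same distance profile. -/
theorem stmt_8 (D n : ℕ) (hD : 2 ≤ D) (hn : n = 2 * D ∨ n = 2 * D + 1)
    (t t' : ZMod n × ZMod n × ZMod n) :
    t' ∈ MulAction.orbit (cycAut n) t ↔
      (cycDist n t.2.1 t.2.2 = cycDist n t'.2.1 t'.2.2
        ∧ cycDist n t.1 t.2.2 = cycDist n t'.1 t'.2.2
        ∧ cycDist n t.1 t.2.1 = cycDist n t'.1 t'.2.1) := by
  have : NeZero n := ⟨by omega⟩
  obtain ⟨x, y, z⟩ := t
  obtain ⟨x', y', z'⟩ := t'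
  simp only [MulAction.mem_orbit_iff, Subtype.exists, Subgroup.mk_smul, Equiv.Perm.smul_def,
    Prod.smul_mk, Prod.mk.injEq]
  constructor
  · rintro ⟨g, hg, rfl, rfl, rfl⟩
    exact ⟨(cycDist_apply_of_mem_cycAut hg y z).symm, (cycDist_apply_of_mem_cycAut hg x z).symm,
      (cycDist_apply_of_mem_cycAut hg x y).symm⟩
  · rintro ⟨hyz, hxz, hxy⟩
    rw [cycDist_eq_cycDist_iff] at hyz hxz hxy
    rw [← sub_sub_sub_cancel_left z y x, ← sub_sub_sub_cancel_left z' y' x'] at hyz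
    rcases eq_and_eq_or_eq_neg_and_eq_neg hxy hxz hyz with ⟨hy, hz⟩ | ⟨hy, hz⟩
    · refine ⟨_, addLeft_mem_cycAut (x' - x), ?_, ?_, ?_⟩ <;> simp only [Equiv.coe_addLeft]
      · ring
      · linear_combination -hy
      · linear_combination -hz
    · refine ⟨_, subLeft_mem_cycAut (x' + x), ?_, ?_, ?_⟩ <;> simp only [Equiv.subLeft_apply]
      · ring
      · linear_combination hy
      · linear_combination hz
end

section
/- Let D ≥ 2, let n = 2D or n = 2D+1, and let Γ be the cycle graph on ZMod n. Let x,y ∈ ZMod n be such that the Aut(Γ)-orbit O(x,y,0) of (x,y,0) has cardinality n (i.e., for n = 2D: x,y ∈ {0,D}; for n = 2D+1: x = y = 0). Let χ_O denote the indicator function of an orbit O. Then: A^{(1)} χ_{O(x,y,0)} = χ_{O(x-1,y,0)} = χ_{O(x+1,y,0)}; A^{(2)} χ_{O(x,y,0)} = χ_{O(x,y-1,0)} = χ_{O(x,y+1,0)}; and A^{(3)} χ_{O(x,y,0)} = χ_{O(x,y,-1)} = χ_{O(x,y,1)}. -/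
/-- The characteristic (indicator) function of the `Aut(Γ)`-orbit of a triple `t`. -/
noncomputable def chiOrbit (n : ℕ) (t : ZMod n × ZMod n × ZMod n) :
    ZMod n × ZMod n × ZMod n → ℂ :=
  (MulAction.orbit (cycAut n) t).indicator 1

/-- The operator `A^{(1)}`. -/
def Aop1 (n : ℕ) (f : ZMod n × ZMod n × ZMod n → ℂ) : ZMod n × ZMod n × ZMod n → ℂ :=
  fun t => f (t.1 - 1, t.2.1, t.2.2) + f (t.1 + 1, t.2.1, t.2.2)

/-- The operator `A^{(2)}`. -/
def Aop2 (n : ℕ) (f : ZMod n × ZMod n × ZMod n → ℂ) : ZMod n × ZMod n × ZMod n → ℂ :=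
  fun t => f (t.1, t.2.1 - 1, t.2.2) + f (t.1, t.2.1 + 1, t.2.2)

/-- The operator `A^{(3)}`. -/
def Aop3 (n : ℕ) (f : ZMod n × ZMod n × ZMod n → ℂ) : ZMod n × ZMod n × ZMod n → ℂ :=
  fun t => f (t.1, t.2.1, t.2.2 - 1) + f (t.1, t.2.1, t.2.2 + 1)

/-! The rotations `a ↦ a + c` already move `t = (x, y, 0)` to the `n` distinct diagonal
translates `t + (c, c, c)`, so an orbit of size `n` consists of these alone; since the
reflection `a ↦ -a` also lies in `Aut(Γ)`, this forces `-t = t`. An automorphism `g` preserves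
adjacency, so for a unit vector `e` it sends `t + e` to `g • t ± e`. Hence the orbits of `t + e`
and of `t - e = -(t + e)` are both `(O + e) ∪ (O - e)`, `O` the orbit of `t`, and the two pieces
are disjoint because `2 ≠ 0` in `ZMod n`; so `A^{(i)} χ_O`, which counts the neighbours of a
point lying in `O`, is the indicator of their union. -/

open MulAction

section ShiftSum

variable {V M : Type*} [AddGroup V] [AddMonoid M] [One M]

def shiftSum (e : V) (f : V → M) : V → M := fun p => f (p - e) + f (p + e)

lemma shiftSum_indicator_one {S : Set V} {e : V}
    (h : Disjoint ((· - e) ⁻¹' S) ((· + e) ⁻¹' S)) :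
    shiftSum e (S.indicator 1) = ((· - e) ⁻¹' S ∪ (· + e) ⁻¹' S).indicator (1 : V → M) := by
  rw [Set.indicator_union_of_disjoint h]
  rfl

end ShiftSum

section CycleAut

variable {n : ℕ}

lemma addRight_mem_cycAut (c : ZMod n) : Equiv.addRight c ∈ cycAut n := by
  intro a b
  simp [cycAdj]

lemma neg_mem_cycAut : Equiv.neg (ZMod n) ∈ cycAut n := by
  intro a b
  simp only [cycAdj, Equiv.neg_apply, neg_sub_neg]
  exact Or.comm

lemma apply_add_one_of_mem_cycAut {g : Equiv.Perm (ZMod n)} (hg : g ∈ cycAut n) (a : ZMod n) :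
    g (a + 1) = g a + 1 ∨ g (a + 1) = g a - 1 := by
  rcases (hg a (a + 1)).2 (Or.inr (add_sub_cancel_left a 1)) with h | h
  · exact Or.inr (by linear_combination -h)
  · exact Or.inl (by linear_combination h)

lemma Aop1_eq_shiftSum (f : ZMod n × ZMod n × ZMod n → ℂ) : Aop1 n f = shiftSum (1, 0, 0) f := by
  funext ⟨a, b, c⟩
  simp [Aop1, shiftSum]

lemma Aop2_eq_shiftSum (f : ZMod n × ZMod n × ZMod n → ℂ) : Aop2 n f = shiftSum (0, 1, 0) f := by
  funext ⟨a, b, c⟩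
  simp [Aop2, shiftSum]

lemma Aop3_eq_shiftSum (f : ZMod n × ZMod n × ZMod n → ℂ) : Aop3 n f = shiftSum (0, 0, 1) f := by
  funext ⟨a, b, c⟩
  simp [Aop3, shiftSum]

end CycleAut

section Orbit

variable {n : ℕ} {t e : ZMod n × ZMod n × ZMod n}

def diag (c : ZMod n) : ZMod n × ZMod n × ZMod n := (c, c, c)

def unitVecs (n : ℕ) : Set (ZMod n × ZMod n × ZMod n) := {(1, 0, 0), (0, 1, 0), (0, 0, 1)}

lemma add_diag_mem_orbit (t : ZMod n × ZMod n × ZMod n) (c : ZMod n) :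
    t + diag c ∈ orbit (cycAut n) t :=
  ⟨⟨_, addRight_mem_cycAut c⟩, rfl⟩

lemma neg_mem_orbit (t : ZMod n × ZMod n × ZMod n) : -t ∈ orbit (cycAut n) t :=
  ⟨⟨_, neg_mem_cycAut⟩, rfl⟩

lemma orbit_eq_range_add_diag [NeZero n] (hcard : Nat.card (orbit (cycAut n) t) = n) :
    orbit (cycAut n) t = Set.range (t + diag ·) := by
  have hinj : Function.Injective (t + diag · : ZMod n → _) := fun a b h => by
    simpa [diag] using congrArg (·.2.2) h
  refine (Set.eq_of_subset_of_ncard_le (Set.range_subset_iff.2 (add_diag_mem_orbit t)) ?_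
    (Set.toFinite _)).symm
  rw [← Nat.card_coe_set_eq, hcard, ← Nat.card_coe_set_eq, Nat.card_range_of_injective hinj,
    Nat.card_zmod]

lemma neg_eq_self_of_orbit_eq_range (hO : orbit (cycAut n) t = Set.range (t + diag ·))
    (ht : t.2.2 = 0) : -t = t := by
  obtain ⟨c, hc⟩ := hO ▸ neg_mem_orbit t
  have hc0 : c = 0 := by simpa [diag, ht] using congrArg (·.2.2) hc
  simpa [hc0, diag, Prod.ext_iff] using hc.symm

lemma smul_add_unitVec (g : cycAut n) (t : ZMod n × ZMod n × ZMod n) (he : e ∈ unitVecs n) :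
    g • (t + e) = g • t + e ∨ g • (t + e) = g • t - e := by
  rcases he with rfl | rfl | rfl <;>
    simpa [Prod.ext_iff, Subgroup.smul_def, Equiv.Perm.smul_def] using
      apply_add_one_of_mem_cycAut g.2 _

lemma disjoint_preimage_sub_add_orbit (h2 : (2 : ZMod n) ≠ 0)
    (hO : orbit (cycAut n) t = Set.range (t + diag ·)) (he : e ∈ unitVecs n) :
    Disjoint ((· - e) ⁻¹' orbit (cycAut n) t) ((· + e) ⁻¹' orbit (cycAut n) t) := by
  rw [hO, Set.disjoint_left]
  rintro p ⟨c, hc⟩ ⟨d, hd⟩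
  apply h2
  rcases he with rfl | rfl | rfl <;> simp only [diag, Prod.ext_iff, Prod.fst_add, Prod.snd_add,
    Prod.fst_sub, Prod.snd_sub, sub_zero, add_zero] at hc hd
  · linear_combination hc.1 - hd.1 - hc.2.1 + hd.2.1
  · linear_combination hc.2.1 - hd.2.1 - hc.1 + hd.1
  · linear_combination hc.2.2 - hd.2.2 - hc.1 + hd.1

lemma orbit_add_unitVec (hO : orbit (cycAut n) t = Set.range (t + diag ·)) (hneg : -t = t)
    (he : e ∈ unitVecs n) :
    orbit (cycAut n) (t + e) = (· - e) ⁻¹' orbit (cycAut n) t ∪ (· + e) ⁻¹' orbit (cycAut n) t := by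
  apply Set.Subset.antisymm
  · rintro _ ⟨g, rfl⟩
    rcases smul_add_unitVec g t he with h | h
    · exact Or.inl (by simp [h])
    · exact Or.inr (by simp [h])
  · rw [hO]
    rintro p (⟨c, hc⟩ | ⟨c, hc⟩)
    · convert add_diag_mem_orbit (t + e) c using 1
      rw [add_right_comm]
      exact sub_eq_iff_eq_add.1 hc.symm
    -- `p = -(t + e) + diag c` because `-t = t`
    · rw [← orbit_eq_iff.2 (neg_mem_orbit (t + e))]
      convert add_diag_mem_orbit (-(t + e)) c using 1
      rw [neg_add, hneg, add_right_comm, ← sub_eq_add_neg]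
      exact eq_sub_of_add_eq hc.symm

lemma orbit_sub_eq_orbit_add (hneg : -t = t) :
    orbit (cycAut n) (t - e) = orbit (cycAut n) (t + e) := by
  rw [show t - e = -(t + e) by rw [neg_add, hneg, sub_eq_add_neg]]
  exact orbit_eq_iff.2 (neg_mem_orbit _)

lemma shiftSum_chiOrbit (h2 : (2 : ZMod n) ≠ 0)
    (hO : orbit (cycAut n) t = Set.range (t + diag ·)) (hneg : -t = t) (he : e ∈ unitVecs n) :
    shiftSum e (chiOrbit n t) = chiOrbit n (t - e) ∧ chiOrbit n (t - e) = chiOrbit n (t + e) := by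
  unfold chiOrbit
  rw [orbit_sub_eq_orbit_add hneg, orbit_add_unitVec hO hneg he,
    shiftSum_indicator_one (disjoint_preimage_sub_add_orbit h2 hO he)]
  exact ⟨rfl, rfl⟩

end Orbit

/-- action of `A^{(1)}, A^{(2)}, A^{(3)}` on the characteristic vector of
an orbit of size `n` ("corner point"). -/
theorem stmt_12 (D n : ℕ) (hD : 2 ≤ D) (hn : n = 2 * D ∨ n = 2 * D + 1)
    (x y : ZMod n)
    (hcard : Nat.card ↥(MulAction.orbit (cycAut n) (x, y, (0 : ZMod n))) = n) :
    (Aop1 n (chiOrbit n (x, y, 0)) = chiOrbit n (x - 1, y, 0)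
      ∧ chiOrbit n (x - 1, y, 0) = chiOrbit n (x + 1, y, 0))
    ∧ (Aop2 n (chiOrbit n (x, y, 0)) = chiOrbit n (x, y - 1, 0)
      ∧ chiOrbit n (x, y - 1, 0) = chiOrbit n (x, y + 1, 0))
    ∧ (Aop3 n (chiOrbit n (x, y, 0)) = chiOrbit n (x, y, -1)
      ∧ chiOrbit n (x, y, -1) = chiOrbit n (x, y, 1)) := by
  have hn3 : 3 ≤ n := by omega
  have : NeZero n := ⟨by omega⟩
  have h2 : (2 : ZMod n) ≠ 0 := by
    have : ((2 : ℕ) : ZMod n) ≠ 0 := by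
      rw [Ne, ZMod.natCast_eq_zero_iff]
      exact Nat.not_dvd_of_pos_of_lt two_pos hn3
    exact_mod_cast this
  have hO := orbit_eq_range_add_diag hcard
  have hneg := neg_eq_self_of_orbit_eq_range hO rfl
  have key := fun e (he : e ∈ unitVecs n) => shiftSum_chiOrbit h2 hO hneg he
  rw [Aop1_eq_shiftSum, Aop2_eq_shiftSum, Aop3_eq_shiftSum]
  refine ⟨?_, ?_, ?_⟩
  · simpa using key (1, 0, 0) (by simp [unitVecs])
  · simpa using key (0, 1, 0) (by simp [unitVecs])
  · simpa using key (0, 0, 1) (by simp [unitVecs])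
end

section
/- Let D ≥ 2, let n = 2D or n = 2D+1, and let Γ be the cycle graph on ZMod n. Let x,y ∈ ZMod n be such that the Aut(Γ)-orbit O(x,y,0) of (x,y,0) has cardinality 2n. Let χ_O denote the indicator function of an orbit O. Then: A^{(1)} χ_{O(x,y,0)} = (2n/|O(x-1,y,0)|) χ_{O(x-1,y,0)} + (2n/|O(x+1,y,0)|) χ_{O(x+1,y,0)}; A^{(2)} χ_{O(x,y,0)} = (2n/|O(x,y-1,0)|) χ_{O(x,y-1,0)} + (2n/|O(x,y+1,0)|) χ_{O(x,y+1,0)}; and A^{(3)} χ_{O(x,y,0)} = (2n/|O(x,y,-1)|) χ_{O(x,y,-1)} + (2n/|O(x,y,1)|) χ_{O(x,y,1)}. -/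
open MulAction

section OrbitCounting

variable {G X : Type*} [Group G] [MulAction G X]

theorem ncard_setOf_smul_eq_comm (a b : X) :
    {g : G | g • a = b}.ncard = {g : G | g • b = a}.ncard := by
  have : (fun g : G => g⁻¹) '' {g | g • a = b} = {g | g • b = a} := by
    ext g
    simp only [Set.mem_image, Set.mem_ofPred_eq]
    constructor
    · rintro ⟨k, rfl, rfl⟩
      exact inv_smul_smul k a
    · rintro rfl
      exact ⟨g⁻¹, inv_smul_smul g b, inv_inv g⟩
  rw [← this, Set.ncard_image_of_injective _ inv_injective]

theorem ncard_setOf_smul_eq_of_mem_orbit {a b : X} (hb : b ∈ orbit G a) :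
    {g : G | g • a = b}.ncard = Nat.card (stabilizer G a) := by
  obtain ⟨g₀, rfl⟩ := hb
  have : {g : G | g • a = g₀ • a} = (g₀ * ·) '' (stabilizer G a : Set G) := by
    ext g
    simp only [Set.mem_ofPred_eq, Set.mem_image, SetLike.mem_coe, mem_stabilizer_iff]
    constructor
    · intro hg
      exact ⟨g₀⁻¹ * g, by rw [mul_smul, hg, inv_smul_smul], mul_inv_cancel_left g₀ g⟩
    · rintro ⟨k, hk, rfl⟩
      rw [mul_smul, hk]
  rw [this, Set.ncard_image_of_injective _ (mul_right_injective g₀), ← Nat.card_coe_set_eq]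
  rfl

theorem ncard_setOf_smul_eq_of_notMem_orbit {a b : X} (hb : b ∉ orbit G a) :
    {g : G | g • a = b}.ncard = 0 := by
  have : {g : G | g • a = b} = ∅ := Set.eq_empty_of_forall_notMem fun g hg => hb ⟨g, hg⟩
  rw [this, Set.ncard_empty]

variable {K : Type*} [Field K] [CharZero K]

theorem cast_ncard_setOf_smul_eq [Finite G] (a b : X) :
    ({g : G | g • a = b}.ncard : K) = Nat.card (stabilizer G a) * (orbit G a).indicator 1 b := by
  by_cases hb : b ∈ orbit G a
  · simp [ncard_setOf_smul_eq_of_mem_orbit hb, hb]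
  · simp [ncard_setOf_smul_eq_of_notMem_orbit hb, hb]

theorem card_orbit_div_card_orbit [Finite G] (a b : X) :
    (Nat.card (orbit G a) : K) / Nat.card (orbit G b)
      = Nat.card (stabilizer G b) / Nat.card (stabilizer G a) := by
  have hcard (c : X) : (Nat.card (orbit G c) : K) * Nat.card (stabilizer G c) = Nat.card G := by
    rw [← Nat.cast_mul, ← Nat.card_prod, Nat.card_congr (orbitProdStabilizerEquivGroup G c)]
  have hb : Nat.card (orbit G b) ≠ 0 :=
    Nat.card_ne_zero.mpr ⟨(nonempty_orbit b).to_subtype, (Finite.finite_mulAction_orbit b).to_subtype⟩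
  rw [div_eq_div_iff (Nat.cast_ne_zero.mpr hb) (Nat.cast_ne_zero.mpr Nat.card_pos.ne'), hcard,
    mul_comm, hcard]

end OrbitCounting

section Steps

variable {G X : Type*} [Group G] [AddCommGroup X] [MulAction G X]

def IsStep (v p q : X) : Prop := q - p = v ∨ p - q = v

theorem isStep_comm {v p q : X} : IsStep v p q ↔ IsStep v q p := Or.comm

theorem isStep_iff_eq_sub_or_eq_add {v p q : X} : IsStep v p q ↔ q = p - v ∨ q = p + v := by
  unfold IsStep
  constructor
  · rintro (h | h)
    · right; rw [← h]; abel
    · left; rw [← h]; abel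
  · rintro (rfl | rfl)
    · right; abel
    · left; abel

variable (G) in
def StepInvariant (v : X) : Prop := ∀ (g : G) (p q : X), IsStep v (g • p) (g • q) ↔ IsStep v p q

theorem ncard_setOf_isStep_smul_comm {v : X} (hG : StepInvariant G v) (s t : X) :
    {g : G | IsStep v s (g • t)}.ncard = {g : G | IsStep v t (g • s)}.ncard := by
  have : (fun g : G => g⁻¹) '' {g | IsStep v s (g • t)} = {g | IsStep v t (g • s)} := by
    ext g
    simp only [Set.mem_image, Set.mem_ofPred_eq]
    constructor
    · rintro ⟨k, hk, rfl⟩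
      rwa [isStep_comm, ← hG k, smul_inv_smul]
    · intro hg
      refine ⟨g⁻¹, ?_, inv_inv g⟩
      rwa [← hG g, smul_inv_smul, isStep_comm]
  rw [← this, Set.ncard_image_of_injective _ inv_injective]

theorem ncard_setOf_isStep_smul [Finite G] {v : X} (hv : v + v ≠ 0) (s t : X) :
    {g : G | IsStep v s (g • t)}.ncard
      = {g : G | g • t = s - v}.ncard + {g : G | g • t = s + v}.ncard := by
  have hunion : {g : G | IsStep v s (g • t)} = {g | g • t = s - v} ∪ {g | g • t = s + v} := by
    ext g
    simp only [isStep_iff_eq_sub_or_eq_add, Set.mem_ofPred_eq, Set.mem_union]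
  have hdisj : Disjoint {g : G | g • t = s - v} {g | g • t = s + v} :=
    Set.disjoint_left.mpr fun g (h₁ : g • t = s - v) (h₂ : g • t = s + v) => hv <|
      calc v + v = (s + v) - (s - v) := by abel
        _ = 0 := by rw [← h₁, ← h₂, sub_self]
  rw [hunion, Set.ncard_union_eq hdisj]

theorem indicator_orbit_sub_add_indicator_orbit_add {K : Type*} [Field K] [CharZero K] [Finite G]
    {v : X} (hG : StepInvariant G v) (hv : v + v ≠ 0) (t : X) :
    (fun s => (orbit G t).indicator (1 : X → K) (s - v) + (orbit G t).indicator 1 (s + v))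
      = ((Nat.card (orbit G t) : K) / Nat.card (orbit G (t - v))) • (orbit G (t - v)).indicator 1
        + ((Nat.card (orbit G t) : K) / Nat.card (orbit G (t + v))) •
          (orbit G (t + v)).indicator 1 := by
  funext s
  have key : (Nat.card (stabilizer G t) : K)
        * ((orbit G t).indicator 1 (s - v) + (orbit G t).indicator 1 (s + v))
      = Nat.card (stabilizer G (t - v)) * (orbit G (t - v)).indicator 1 s
        + Nat.card (stabilizer G (t + v)) * (orbit G (t + v)).indicator 1 s := by
    simp only [mul_add, ← cast_ncard_setOf_smul_eq]
    rw [ncard_setOf_smul_eq_comm (t - v), ncard_setOf_smul_eq_comm (t + v)]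
    exact_mod_cast (ncard_setOf_isStep_smul hv s t).symm.trans
      ((ncard_setOf_isStep_smul_comm hG s t).trans (ncard_setOf_isStep_smul hv t s))
  simp only [Pi.add_apply, Pi.smul_apply, smul_eq_mul, card_orbit_div_card_orbit,
    div_mul_eq_mul_div]
  rw [← add_div, eq_div_iff (Nat.cast_ne_zero.mpr Nat.card_pos.ne'), mul_comm]
  exact key

end Steps

section Products

variable {G X Y : Type*} [Group G] [AddCommGroup X] [AddCommGroup Y] [MulAction G X] [MulAction G Y]

theorem isStep_prod_mk_zero {v : X} {p q : X × Y} :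
    IsStep ((v, 0) : X × Y) p q ↔ IsStep v p.1 q.1 ∧ p.2 = q.2 := by
  simp only [IsStep, Prod.ext_iff, Prod.fst_sub, Prod.snd_sub, sub_eq_zero, eq_comm (a := q.2),
    or_and_right]

theorem isStep_prod_zero_mk {w : Y} {p q : X × Y} :
    IsStep ((0, w) : X × Y) p q ↔ p.1 = q.1 ∧ IsStep w p.2 q.2 := by
  simp only [IsStep, Prod.ext_iff, Prod.fst_sub, Prod.snd_sub, sub_eq_zero, eq_comm (a := q.1),
    and_or_left]

theorem StepInvariant.prod_mk_zero {v : X} (hG : StepInvariant G v) :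
    StepInvariant G ((v, 0) : X × Y) := by
  intro g p q
  simp only [isStep_prod_mk_zero, Prod.smul_fst, Prod.smul_snd, hG g, smul_left_cancel_iff]

theorem StepInvariant.prod_zero_mk {w : Y} (hG : StepInvariant G w) :
    StepInvariant G ((0, w) : X × Y) := by
  intro g p q
  simp only [isStep_prod_zero_mk, Prod.smul_fst, Prod.smul_snd, hG g, smul_left_cancel_iff]

end Products

theorem stepInvariant_cycAut_one (n : ℕ) : StepInvariant (cycAut n) (1 : ZMod n) :=
  fun g p q => g.2 q p

theorem ZMod.one_add_one_ne_zero {n : ℕ} (hn : 2 < n) : (1 : ZMod n) + 1 ≠ 0 := by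
  rw [one_add_one_eq_two, ← Nat.cast_ofNat, Ne, ZMod.natCast_eq_zero_iff]
  exact fun h => absurd (Nat.le_of_dvd two_pos h) (by omega)

theorem Aop1_eq (n : ℕ) (f : ZMod n × ZMod n × ZMod n → ℂ) :
    Aop1 n f = fun s => f (s - (1, 0, 0)) + f (s + (1, 0, 0)) := by
  funext ⟨a, b, c⟩
  simp [Aop1]

theorem Aop2_eq (n : ℕ) (f : ZMod n × ZMod n × ZMod n → ℂ) :
    Aop2 n f = fun s => f (s - (0, 1, 0)) + f (s + (0, 1, 0)) := by
  funext ⟨a, b, c⟩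
  simp [Aop2]

theorem Aop3_eq (n : ℕ) (f : ZMod n × ZMod n × ZMod n → ℂ) :
    Aop3 n f = fun s => f (s - (0, 0, 1)) + f (s + (0, 0, 1)) := by
  funext ⟨a, b, c⟩
  simp [Aop3]

/-- action of `A^{(1)}, A^{(2)}, A^{(3)}` on the characteristic vector of
an orbit of size `2n` ("non-corner point"), with coefficients `2n / |orbit|`. -/
theorem stmt_13 (D n : ℕ) (hD : 2 ≤ D) (hn : n = 2 * D ∨ n = 2 * D + 1)
    (x y : ZMod n)
    (hcard : Nat.card ↥(MulAction.orbit (cycAut n) (x, y, (0 : ZMod n))) = 2 * n) :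
    Aop1 n (chiOrbit n (x, y, 0))
        = ((2 * n : ℂ) / (Nat.card ↥(MulAction.orbit (cycAut n) (x - 1, y, (0 : ZMod n))) : ℂ))
            • chiOrbit n (x - 1, y, 0)
          + ((2 * n : ℂ) / (Nat.card ↥(MulAction.orbit (cycAut n) (x + 1, y, (0 : ZMod n))) : ℂ))
            • chiOrbit n (x + 1, y, 0)
    ∧ Aop2 n (chiOrbit n (x, y, 0))
        = ((2 * n : ℂ) / (Nat.card ↥(MulAction.orbit (cycAut n) (x, y - 1, (0 : ZMod n))) : ℂ))
            • chiOrbit n (x, y - 1, 0)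
          + ((2 * n : ℂ) / (Nat.card ↥(MulAction.orbit (cycAut n) (x, y + 1, (0 : ZMod n))) : ℂ))
            • chiOrbit n (x, y + 1, 0)
    ∧ Aop3 n (chiOrbit n (x, y, 0))
        = ((2 * n : ℂ) / (Nat.card ↥(MulAction.orbit (cycAut n) (x, y, (-1 : ZMod n))) : ℂ))
            • chiOrbit n (x, y, -1)
          + ((2 * n : ℂ) / (Nat.card ↥(MulAction.orbit (cycAut n) (x, y, (1 : ZMod n))) : ℂ))
            • chiOrbit n (x, y, 1) := by
  have : NeZero n := ⟨by omega⟩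
  have h2 : (1 : ZMod n) + 1 ≠ 0 := ZMod.one_add_one_ne_zero (by omega)
  have hstep := stepInvariant_cycAut_one n
  have hstep₁ : StepInvariant (cycAut n) ((1, 0, 0) : ZMod n × ZMod n × ZMod n) := by
    simpa only [Prod.mk_zero_zero] using hstep.prod_mk_zero (Y := ZMod n × ZMod n)
  simp only [Aop1_eq, Aop2_eq, Aop3_eq, chiOrbit]
  rw [indicator_orbit_sub_add_indicator_orbit_add hstep₁ fun h => h2 (congrArg (·.1) h),
    indicator_orbit_sub_add_indicator_orbit_add hstep.prod_mk_zero.prod_zero_mk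
      fun h => h2 (congrArg (·.2.1) h),
    indicator_orbit_sub_add_indicator_orbit_add hstep.prod_zero_mk.prod_zero_mk
      fun h => h2 (congrArg (·.2.2) h)]
  simp only [Prod.mk_sub_mk, Prod.mk_add_mk, sub_zero, add_zero, zero_sub, zero_add, hcard,
    Nat.cast_mul, Nat.cast_ofNat, and_self]
end
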